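/- arXiv:2505.13679 — 4 statements merged into one kernel-verified Lean document; each statement's English description precedes it below -/
import Mathlib

section
/- If I is a binary matrix and R, C are permutation matrices satisfying R·I = I·Cᵀ, then the block matrices H_X = [Iᵀ | 1+C] and H_Z = [1+R | I] satisfy H_X · H_Zᵀ = 0 over GF(2). -/
open Matrix

def IsPermMatrix {k : ℕ} (M : Matrix (Fin k) (Fin k) (ZMod 2)) : Prop :=
  ∃ σ : Equiv.Perm (Fin k), M = σ.permMatrix (ZMod 2)

namespace Matrix

variable {m n α : Type*}

theorem add_self_eq_zero_of_charTwo [Semiring α] [CharP α 2] (A : Matrix m n α) : A + A = 0 :=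
  ext fun _ _ ↦ CharTwo.add_self_eq_zero _

theorem transpose_mul_transpose_eq_of_mul_eq [Fintype m] [Fintype n] [CommSemiring α]
    {I : Matrix m n α} {R : Matrix m m α} {C : Matrix n n α} (h : R * I = I * Cᵀ) :
    Iᵀ * Rᵀ = C * Iᵀ := by
  rw [← transpose_mul, h, transpose_mul, transpose_transpose]

theorem fromCols_mul_transpose_fromCols [Fintype m] [Fintype n] [DecidableEq m] [DecidableEq n]
    [CommSemiring α] (I : Matrix m n α) (R : Matrix m m α) (C : Matrix n n α) :
    fromCols Iᵀ (1 + C) * (fromCols (1 + R) I)ᵀ = (Iᵀ + Iᵀ) + (Iᵀ * Rᵀ + C * Iᵀ) := by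
  rw [transpose_fromCols, fromCols_mul_fromRows, transpose_add, transpose_one, Matrix.mul_add,
    Matrix.mul_one, Matrix.add_mul, Matrix.one_mul, add_add_add_comm]

/-- Whenever `R * I = I * Cᵀ`, the two summands `Iᵀ * Rᵀ` and `C * Iᵀ` of the product coincide,
so in characteristic two they cancel, as do the two copies of `Iᵀ`. -/
theorem fromCols_mul_transpose_fromCols_eq_zero [Fintype m] [Fintype n] [DecidableEq m]
    [DecidableEq n] [CommSemiring α] [CharP α 2] {I : Matrix m n α} {R : Matrix m m α}
    {C : Matrix n n α} (h : R * I = I * Cᵀ) :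
    fromCols Iᵀ (1 + C) * (fromCols (1 + R) I)ᵀ = 0 := by
  rw [fromCols_mul_transpose_fromCols, transpose_mul_transpose_eq_of_mul_eq h,
    add_self_eq_zero_of_charTwo, add_self_eq_zero_of_charTwo, add_zero]

end Matrix

theorem balanced_product_commute_general
    {m n : ℕ} (I : Matrix (Fin m) (Fin n) (ZMod 2))
    (R : Matrix (Fin m) (Fin m) (ZMod 2)) (C : Matrix (Fin n) (Fin n) (ZMod 2))
    (hsym : R * I = I * Cᵀ) :
    (fromCols Iᵀ (1 + C)) * (fromCols (1 + R) I)ᵀ = 0 :=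
  fromCols_mul_transpose_fromCols_eq_zero hsym

/-- If `R·I = I·Cᵀ` for permutation matrices `R`, `C`, then
`H_X = [Iᵀ | 1+C]` and `H_Z = [1+R | I]` satisfy `H_X · H_Zᵀ = 0` over GF(2). -/
theorem balanced_product_commute
    {m n : ℕ} (I : Matrix (Fin m) (Fin n) (ZMod 2))
    (R : Matrix (Fin m) (Fin m) (ZMod 2)) (C : Matrix (Fin n) (Fin n) (ZMod 2))
    (hR : IsPermMatrix R) (hC : IsPermMatrix C)
    (hsym : R * I = I * Cᵀ) :
    (fromCols Iᵀ (1 + C)) * (fromCols (1 + R) I)ᵀ = 0 :=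
  balanced_product_commute_general I R C hsym
end

section
/- More generally, if I is a binary matrix with symmetry R·I = I·Cᵀ and f is any polynomial with coefficients in GF(2), then H_X = [Iᵀ | f(C)] and H_Z = [f(R) | I] satisfy H_X · H_Zᵀ = 0 over GF(2). -/
/- `R * I = I * Cᵀ` says that `Iᵀ` intertwines `Rᵀ` and `C`; intertwining passes to every
polynomial in the two matrices, so the two blocks of `H_X * H_Zᵀ` are the same matrix
`f(C) * Iᵀ`, and their sum vanishes in characteristic two. -/

open Matrix Polynomial

namespace Matrix

variable {m n K : Type*} [Fintype m] [Fintype n] [DecidableEq m] [DecidableEq n] [CommRing K]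

theorem transpose_aeval (M : Matrix n n K) (f : K[X]) : (aeval M f)ᵀ = aeval Mᵀ f := by
  induction f using Polynomial.induction_on' with
  | add p q hp hq => rw [map_add, map_add, transpose_add, hp, hq]
  | monomial k a =>
    simp only [aeval_monomial, Algebra.algebraMap_eq_smul_one, transpose_pow, transpose_smul,
      Matrix.smul_mul, Matrix.one_mul]

theorem mul_pow_eq_pow_mul_of_mul_eq_mul {A : Matrix n n K} {B : Matrix m m K}
    {X : Matrix n m K} (h : X * B = A * X) (k : ℕ) : X * B ^ k = A ^ k * X := by
  induction k with
  | zero => simp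
  | succ k ih => rw [pow_succ, ← Matrix.mul_assoc, ih, Matrix.mul_assoc, h, ← Matrix.mul_assoc,
      ← pow_succ]

theorem mul_aeval_eq_aeval_mul_of_mul_eq_mul {A : Matrix n n K} {B : Matrix m m K}
    {X : Matrix n m K} (h : X * B = A * X) (f : K[X]) : X * aeval B f = aeval A f * X := by
  induction f using Polynomial.induction_on' with
  | add p q hp hq => rw [map_add, map_add, Matrix.mul_add, Matrix.add_mul, hp, hq]
  | monomial k a =>
    simp only [aeval_monomial, Algebra.algebraMap_eq_smul_one, Matrix.smul_mul, Matrix.mul_smul,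
      Matrix.one_mul, mul_pow_eq_pow_mul_of_mul_eq_mul h]

end Matrix

theorem balanced_product_commute_poly_general
    {m n : ℕ} (I : Matrix (Fin m) (Fin n) (ZMod 2))
    (R : Matrix (Fin m) (Fin m) (ZMod 2)) (C : Matrix (Fin n) (Fin n) (ZMod 2))
    (hsym : R * I = I * Cᵀ) (f : Polynomial (ZMod 2)) :
    (fromCols Iᵀ (aeval C f)) * (fromCols (aeval R f) I)ᵀ = 0 := by
  have hintertwine : Iᵀ * Rᵀ = C * Iᵀ := by
    rw [← transpose_mul, hsym, transpose_mul, transpose_transpose]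
  have hblocks : Iᵀ * (aeval R f)ᵀ = aeval C f * Iᵀ := by
    rw [transpose_aeval, mul_aeval_eq_aeval_mul_of_mul_eq_mul hintertwine]
  rw [transpose_fromCols, fromCols_mul_fromRows, hblocks]
  ext i j
  exact CharTwo.add_self_eq_zero _

/-- If `R·I = I·Cᵀ` and `f` is any polynomial over GF(2), then
`H_X = [Iᵀ | f(C)]` and `H_Z = [f(R) | I]` satisfy `H_X · H_Zᵀ = 0`. -/
theorem balanced_product_commute_poly
    {m n : ℕ} (I : Matrix (Fin m) (Fin n) (ZMod 2))
    (R : Matrix (Fin m) (Fin m) (ZMod 2)) (C : Matrix (Fin n) (Fin n) (ZMod 2))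
    (hR : IsPermMatrix R) (hC : IsPermMatrix C)
    (hsym : R * I = I * Cᵀ) (f : Polynomial (ZMod 2)) :
    (fromCols Iᵀ (aeval C f)) * (fromCols (aeval R f) I)ᵀ = 0 :=
  balanced_product_commute_poly_general I R C hsym f
end

section
/- Let v be a vector in the left kernel of Iᵀ (i.e., v·I = 0 over GF(2)) where R·I = I·Cᵀ and Rˡ = 1. Then the vector w = (∑_{i=0}^{l-1} (Rᵀ)ⁱ) v satisfies both w·I = 0 and (1+Rᵀ)·w = 0. -/
open Matrix Finset

/-!
Iterating `R I = I Cᵀ` gives `(∑ Rⁱ) I = I (∑ (Cᵀ)ⁱ)`, so `w = v (∑ Rⁱ)` satisfies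
`w I = v I (∑ (Cᵀ)ⁱ) = 0`. Over `GF(2)` we have `1 + Rᵀ = Rᵀ - 1`, and the geometric sum
telescopes: `(Rᵀ - 1) ∑_{i<l} (Rᵀ)ⁱ = (Rᵀ)ˡ - 1 = 0`.
-/

namespace Matrix

variable {α m n : Type*} [Fintype m] [DecidableEq m] [Fintype n] [DecidableEq n] [Semiring α]
  {A : Matrix m m α} {B : Matrix m n α} {C : Matrix n n α}

theorem pow_mul_eq_mul_pow_of_mul_eq (h : A * B = B * C) (k : ℕ) : A ^ k * B = B * C ^ k := by
  induction k with
  | zero => simp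
  | succ k ih => rw [pow_succ', Matrix.mul_assoc, ih, ← Matrix.mul_assoc, h, Matrix.mul_assoc,
      ← pow_succ']

theorem geom_sum_mul_eq_mul_geom_sum_of_mul_eq (h : A * B = B * C) (l : ℕ) :
    (∑ i ∈ range l, A ^ i) * B = B * ∑ i ∈ range l, C ^ i := by
  rw [Matrix.sum_mul, Matrix.mul_sum]
  exact sum_congr rfl fun k _ ↦ pow_mul_eq_mul_pow_of_mul_eq h k

end Matrix

theorem one_add_mul_geom_sum_eq_zero {A : Type*} [Ring A] [Module (ZMod 2) A] {x : A} {l : ℕ}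
    (hx : x ^ l = 1) : (1 + x) * ∑ i ∈ range l, x ^ i = 0 := by
  rw [add_comm, ← ZModModule.sub_eq_add, mul_geom_sum, hx, sub_self]

theorem symmetrised_null_vector_general
    {m n : ℕ} (I : Matrix (Fin m) (Fin n) (ZMod 2))
    (R : Matrix (Fin m) (Fin m) (ZMod 2)) (C : Matrix (Fin n) (Fin n) (ZMod 2))
    (hsym : R * I = I * Cᵀ) (l : ℕ) (hl : R ^ l = 1)
    (v : Fin m → ZMod 2) (hv : v ᵥ* I = 0) :
    ((∑ i ∈ range l, (Rᵀ) ^ i) *ᵥ v) ᵥ* I = 0 ∧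
      (1 + Rᵀ) *ᵥ ((∑ i ∈ range l, (Rᵀ) ^ i) *ᵥ v) = 0 := by
  have hsum : ∑ i ∈ range l, (Rᵀ) ^ i = (∑ i ∈ range l, R ^ i)ᵀ := by
    simp only [transpose_sum, transpose_pow]
  have hRl : (Rᵀ) ^ l = 1 := by rw [← transpose_pow, hl, transpose_one]
  constructor
  · rw [hsum, mulVec_transpose, vecMul_vecMul, geom_sum_mul_eq_mul_geom_sum_of_mul_eq hsym,
      ← vecMul_vecMul, hv, zero_vecMul]
  · rw [mulVec_mulVec, one_add_mul_geom_sum_eq_zero hRl, zero_mulVec]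

/-- If `v·I = 0`, `R·I = I·Cᵀ` and `Rˡ = 1`, then
`w = (∑_{i<l} (Rᵀ)ⁱ) v` satisfies `w·I = 0` and `(1+Rᵀ)·w = 0`. -/
theorem symmetrised_null_vector
    {m n : ℕ} (I : Matrix (Fin m) (Fin n) (ZMod 2))
    (R : Matrix (Fin m) (Fin m) (ZMod 2)) (C : Matrix (Fin n) (Fin n) (ZMod 2))
    (hR : IsPermMatrix R) (hC : IsPermMatrix C)
    (hsym : R * I = I * Cᵀ) (l : ℕ) (hl : R ^ l = 1)
    (v : Fin m → ZMod 2) (hv : v ᵥ* I = 0) :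
    ((∑ i ∈ range l, (Rᵀ) ^ i) *ᵥ v) ᵥ* I = 0 ∧
      (1 + Rᵀ) *ᵥ ((∑ i ∈ range l, (Rᵀ) ^ i) *ᵥ v) = 0 :=
  symmetrised_null_vector_general I R C hsym l hl v hv
end

section
/- Under the balanced product symmetry R·I = I·Cᵀ and with v = Iᵀh, u = u' + (1+Rᵀ)h, Iᵀu' = 0, one has (1+C^t)v = Iᵀ u^(t) for all t ≥ 1, where u^(t) = (∑_{i=0}^{t-1}(Rᵀ)ⁱ)u. -/
open Matrix Finset

/-- Under `R·I = I·Cᵀ`, with `v = Iᵀh`, `u = u' + (1+Rᵀ)h` and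
`Iᵀu' = 0`, one has `(1+Cᵗ)v = Iᵀ u^(t)` for all `t ≥ 1`, where
`u^(t) = (∑_{i<t}(Rᵀ)ⁱ)u`. -/
theorem dressed_syndrome_identity
    {m n : ℕ} (I : Matrix (Fin m) (Fin n) (ZMod 2))
    (R : Matrix (Fin m) (Fin m) (ZMod 2)) (C : Matrix (Fin n) (Fin n) (ZMod 2))
    (hR : IsPermMatrix R) (hC : IsPermMatrix C)
    (hsym : R * I = I * Cᵀ)
    (h u u' : Fin m → ZMod 2) (v : Fin n → ZMod 2)
    (hv : v = Iᵀ *ᵥ h) (hu' : Iᵀ *ᵥ u' = 0)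
    (hu : u = u' + (1 + Rᵀ) *ᵥ h) :
    ∀ t : ℕ, 1 ≤ t →
      (1 + C ^ t) *ᵥ v = Iᵀ *ᵥ ((∑ i ∈ range t, (Rᵀ) ^ i) *ᵥ u) := by
  intro t ht
  have key : Iᵀ * Rᵀ = C * Iᵀ := by
    have := congrArg Matrix.transpose hsym
    simpa [Matrix.transpose_mul] using this
  have key2 : ∀ i : ℕ, Iᵀ * (Rᵀ) ^ i = C ^ i * Iᵀ := by
    intro i
    induction i with
    | zero => simp
    | succ k ih =>
      rw [pow_succ, pow_succ, ← Matrix.mul_assoc, ih, Matrix.mul_assoc, key, ← Matrix.mul_assoc]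
  have hIu : Iᵀ *ᵥ u = (1 + C) *ᵥ v := by
    rw [hu, Matrix.mulVec_add, hu', zero_add, hv, Matrix.mulVec_mulVec,
      Matrix.mul_add, Matrix.mul_one, key, Matrix.add_mulVec, Matrix.add_mulVec,
      Matrix.one_mulVec, ← Matrix.mulVec_mulVec]
  rw [Matrix.mulVec_mulVec, Matrix.mul_sum]
  simp only [key2]
  rw [← Matrix.sum_mul, ← Matrix.mulVec_mulVec, hIu, Matrix.mulVec_mulVec]
  have hs : ∀ (A B : Matrix (Fin n) (Fin n) (ZMod 2)), A - B = A + B := by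
    intro A B; ext i j
    simp [Matrix.sub_apply, Matrix.add_apply, sub_eq_add_neg, CharTwo.neg_eq]
  have hgeom : (∑ i ∈ range t, C ^ i) * (1 + C) = 1 + C ^ t := by
    have hg := geom_sum_mul C t
    rw [hs, hs, add_comm C 1, add_comm (C ^ t) 1] at hg
    exact hg
  rw [hgeom]
end
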